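/- Let A be an n×n real symmetric positive semidefinite matrix with eigenvalues λ_1 ≥ λ_2 ≥ … ≥ λ_n ≥ 0 and orthonormal eigenvectors e_1,…,e_n, and suppose λ_q > λ_{q+1} > 0. Define the preconditioned matrix P·A where P := I − Σ_{i=1}^q (1 − λ_{q+1}/λ_i) e_i e_iᵀ. Then P·A is symmetric positive semidefinite with largest eigenvalue λ_{q+1}; specifically, P·A has eigenvalues λ_{q+1} (with multiplicity at least q from the top directions, as PA e_i = λ_{q+1} e_i for i ≤ q) and λ_i for i > q. -/

import Mathlib

/-!
On an orthonormal family `e`, the matrices `eᵢ eᵢᵀ` are mutually orthogonal idempotents, so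
multiplying two matrices of the form `∑ cᵢ • eᵢ eᵢᵀ` multiplies the coefficients pointwise.
Both `A` and `1 - P` have this form, hence `P A = ∑ μᵢ • eᵢ eᵢᵀ` with
`μᵢ = (1 - λ_{q+1}/λᵢ) λᵢ = λ_{q+1}` for `i ≤ q` and `μᵢ = λᵢ` otherwise; a nonnegative
combination of the `eᵢ eᵢᵀ` is positive semidefinite and has the `eᵢ` as eigenvectors.
Indices are 0-based in the code, so `λ_{q+1}` is `lam ⟨q, hq⟩`.
-/

open Matrix

namespace Matrix

variable {m ι R : Type*} [Fintype m] [Fintype ι]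

def spectralSum [CommSemiring R] (e : ι → m → R) (c : ι → R) : Matrix m m R :=
  ∑ i, c i • vecMulVec (e i) (e i)

theorem posSemidef_spectralSum (e : ι → m → ℝ) {c : ι → ℝ} (hc : ∀ i, 0 ≤ c i) :
    (spectralSum e c).PosSemidef :=
  posSemidef_sum _ fun i _ => (posSemidef_vecMulVec_self_star (e i)).smul (hc i)

section Orthonormal

variable [DecidableEq ι] {e : ι → m → R}

theorem vecMulVec_self_mul_spectralSum [CommSemiring R]
    (horth : ∀ i j, e i ⬝ᵥ e j = if i = j then 1 else 0) (c : ι → R) (i : ι) :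
    vecMulVec (e i) (e i) * spectralSum e c = c i • vecMulVec (e i) (e i) := by
  rw [spectralSum, Finset.mul_sum, Finset.sum_eq_single_of_mem i (Finset.mem_univ i)]
  · rw [mul_smul_comm, vecMulVec_mul_vecMulVec, horth, if_pos rfl, one_smul]
  · intro j _ hji
    rw [mul_smul_comm, vecMulVec_mul_vecMulVec, horth, if_neg hji.symm, zero_smul,
      vecMulVec_zero, smul_zero]

theorem spectralSum_mulVec [CommSemiring R]
    (horth : ∀ i j, e i ⬝ᵥ e j = if i = j then 1 else 0) (c : ι → R) (j : ι) :
    spectralSum e c *ᵥ e j = c j • e j := by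
  rw [spectralSum, Matrix.sum_mulVec, Finset.sum_eq_single_of_mem j (Finset.mem_univ j)]
  · rw [smul_mulVec, vecMulVec_mulVec, horth, if_pos rfl, MulOpposite.op_one, one_smul]
  · intro i _ hij
    rw [smul_mulVec, vecMulVec_mulVec, horth, if_neg hij, MulOpposite.op_zero, zero_smul,
      smul_zero]

theorem one_sub_sum_smul_vecMulVec_mul_spectralSum [CommRing R] [DecidableEq m]
    (horth : ∀ i j, e i ⬝ᵥ e j = if i = j then 1 else 0) (s : Finset ι) (d c : ι → R) :
    (1 - ∑ i ∈ s, d i • vecMulVec (e i) (e i)) * spectralSum e c =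
      spectralSum e fun i => if i ∈ s then (1 - d i) * c i else c i := by
  have hs : ∑ i ∈ s, d i • vecMulVec (e i) (e i) * spectralSum e c =
      ∑ i, (if i ∈ s then d i * c i else 0) • vecMulVec (e i) (e i) := by
    simp only [smul_mul_assoc, vecMulVec_self_mul_spectralSum horth, smul_smul, ite_smul,
      zero_smul]
    rw [Finset.sum_ite_mem, Finset.univ_inter]
  rw [sub_mul, one_mul, Finset.sum_mul, hs, spectralSum, spectralSum, ← Finset.sum_sub_distrib]
  refine Finset.sum_congr rfl fun i _ => ?_
  split_ifs <;> simp only [← sub_smul, one_sub_mul, sub_zero]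

end Orthonormal

end Matrix

theorem stmt7 {n : ℕ} (q : ℕ) (hq : q < n)
    (lam : Fin n → ℝ) (e : Fin n → Fin n → ℝ)
    (horth : ∀ i j, e i ⬝ᵥ e j = if i = j then (1 : ℝ) else 0)
    (hmono : ∀ i j : Fin n, i ≤ j → lam j ≤ lam i)
    (hnonneg : ∀ i, 0 ≤ lam i)
    (hpos : 0 < lam ⟨q, hq⟩)
    (A : Matrix (Fin n) (Fin n) ℝ)
    (hA : A = ∑ i, lam i • vecMulVec (e i) (e i)) :
    let P : Matrix (Fin n) (Fin n) ℝ :=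
      1 - ∑ i ∈ Finset.univ.filter (fun i : Fin n => (i : ℕ) < q),
        (1 - lam ⟨q, hq⟩ / lam i) • vecMulVec (e i) (e i)
    (P * A).PosSemidef ∧
      (∀ i : Fin n, (i : ℕ) < q → (P * A) *ᵥ e i = lam ⟨q, hq⟩ • e i) ∧
      (∀ i : Fin n, q ≤ (i : ℕ) → (P * A) *ᵥ e i = lam i • e i) ∧
      (∀ i : Fin n, q ≤ (i : ℕ) → lam i ≤ lam ⟨q, hq⟩) := by
  intro P
  set μ : Fin n → ℝ := fun i => if (i : ℕ) < q then lam ⟨q, hq⟩ else lam i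
  have hPA : P * A = spectralSum e μ := by
    refine hA ▸ (one_sub_sum_smul_vecMulVec_mul_spectralSum horth _ _ lam).trans
      (congrArg _ (funext fun i => ?_))
    simp only [Finset.mem_filter, Finset.mem_univ, true_and, μ]
    split_ifs with hi
    · have hlam : lam i ≠ 0 := (hpos.trans_le (hmono i _ (Fin.le_def.2 hi.le))).ne'
      field_simp
      ring
    · rfl
  refine ⟨?_, fun i hi => ?_, fun i hi => ?_, fun i hi => hmono _ _ (Fin.le_def.2 hi)⟩
  · refine hPA ▸ posSemidef_spectralSum e fun i => ?_
    dsimp only [μ]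
    split_ifs
    exacts [hpos.le, hnonneg i]
  · simp only [hPA, spectralSum_mulVec horth, μ, if_pos hi]
  · simp only [hPA, spectralSum_mulVec horth, μ, if_neg hi.not_gt]
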